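/- arXiv:2012.07914 — 3 statements merged into one kernel-verified Lean document; each statement's English description precedes it below -/
import Mathlib

section
/- Identifying homogeneous quadratic polynomials f on ℝ^n with symmetric matrices M_f = Hess(f)/2 (so f(x) = xᵀM_f x), one has ⟨∇f, ∇g⟩(x) = ⟨(2M_f·2M_g + 2M_g·2M_f)/2 · x, x⟩; in particular a subalgebra generated by quadratics containing r² is Laplacian if and only if its degree-2 part is closed under the Jordan product M∙N = (MN + NM)/2. -/
open MvPolynomial

/-- The Laplacian Δ = Σᵢ ∂²/∂xᵢ². -/
noncomputable def lap {σ : Type*} [Fintype σ] (f : MvPolynomial σ ℝ) :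
    MvPolynomial σ ℝ :=
  ∑ i, pderiv i (pderiv i f)

/-- ⟨∇f, ∇g⟩ = Σᵢ (∂f/∂xᵢ)(∂g/∂xᵢ). -/
noncomputable def gradInner {σ : Type*} [Fintype σ] (f g : MvPolynomial σ ℝ) :
    MvPolynomial σ ℝ :=
  ∑ i, pderiv i f * pderiv i g

/-- r² = Σᵢ xᵢ². -/
noncomputable def rsq {σ : Type*} [Fintype σ] : MvPolynomial σ ℝ := ∑ i, X i ^ 2

/-- The quadratic polynomial x ↦ ⟨Mx, x⟩ = xᵀ M x associated to a matrix M. -/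
noncomputable def quad {n : ℕ} (M : Matrix (Fin n) (Fin n) ℝ) :
    MvPolynomial (Fin n) ℝ :=
  ∑ i, ∑ j, C (M i j) * X i * X j

/-! The partial derivative `∂ₖ (xᵀ M x)` is the linear form given by the `k`-th row of `M + Mᵀ`,
so `⟨∇ quad M, ∇ quad N⟩ = quad ((M + Mᵀ)ᵀ (N + Nᵀ))`; for symmetric `M`, `N` this is
`quad (2M · 2N)`, and `quad` only sees the symmetric part of a matrix, so it is also the quadratic
form of the Jordan product of `2M` and `2N`.

For the equivalence, `Δ(fg) = Δf · g + f · Δg + 2⟨∇f, ∇g⟩`. Hence a Laplacian algebra is closed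
under `⟨∇·, ∇·⟩`, in particular under the Jordan product of its quadratics. Conversely,
`g ↦ ⟨∇f, ∇g⟩` is a derivation, so closure of the quadratic generators under `⟨∇·, ∇·⟩` spreads to
the whole algebra; then the product rule spreads `Δ` from the generators, whose Laplacians
`2 tr M` are constants. Every homogeneous quadratic is `quad M` for a symmetric `M`. -/

open scoped Matrix Pointwise

lemma Derivation.apply_mem_of_mem_adjoin {R A : Type*} [CommSemiring R] [CommSemiring A]
    [Algebra R A] (D : Derivation R A A) {B : Subalgebra R A} {S : Set A} (hSB : S ⊆ B)
    (hD : ∀ s ∈ S, D s ∈ B) {x : A} (hx : x ∈ Algebra.adjoin R S) : D x ∈ B := by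
  have hB : Algebra.adjoin R S ≤ B := Algebra.adjoin_le hSB
  induction hx using Algebra.adjoin_induction with
  | mem s hs => exact hD s hs
  | algebraMap r => simp
  | add x y _ _ hx hy => simpa using B.add_mem hx hy
  | mul x y hx' hy' hx hy =>
    rw [Derivation.leibniz, smul_eq_mul, smul_eq_mul]
    exact B.add_mem (B.mul_mem (hB hx') hy) (B.mul_mem (hB hy') hx)

section Gradient

variable {σ : Type*} [Fintype σ]

noncomputable def linForm (v : σ → ℝ) : MvPolynomial σ ℝ :=
  ∑ j, C (v j) * X j

lemma linForm_add (v w : σ → ℝ) : linForm (v + w) = linForm v + linForm w := by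
  simp only [linForm, Pi.add_apply, map_add, add_mul, Finset.sum_add_distrib]

lemma pderiv_linForm (v : σ → ℝ) (k : σ) : pderiv k (linForm v) = C (v k) := by
  classical
  simp [linForm, pderiv_X, Pi.single_apply]

noncomputable def gradDerivation (f : MvPolynomial σ ℝ) :
    Derivation ℝ (MvPolynomial σ ℝ) (MvPolynomial σ ℝ) :=
  ∑ i, pderiv i f • pderiv i

lemma gradDerivation_apply (f g : MvPolynomial σ ℝ) : gradDerivation f g = gradInner f g := by
  rw [gradDerivation, ← Derivation.coeFnAddMonoidHom_apply, map_sum, Finset.sum_apply]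
  rfl

lemma gradInner_comm (f g : MvPolynomial σ ℝ) : gradInner f g = gradInner g f := by
  simp only [gradInner, mul_comm]

lemma lap_mul (f g : MvPolynomial σ ℝ) :
    lap (f * g) = lap f * g + f * lap g + 2 * gradInner f g := by
  simp only [lap, gradInner, Finset.sum_mul, Finset.mul_sum, ← Finset.sum_add_distrib]
  refine Finset.sum_congr rfl fun i _ => ?_
  simp only [Derivation.leibniz, smul_eq_mul, map_add]
  ring

variable {B : Subalgebra ℝ (MvPolynomial σ ℝ)} {S : Set (MvPolynomial σ ℝ)}

lemma gradInner_mem_of_mem_adjoin_right (hSB : S ⊆ B) {f : MvPolynomial σ ℝ}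
    (hf : ∀ t ∈ S, gradInner f t ∈ B) {g : MvPolynomial σ ℝ} (hg : g ∈ Algebra.adjoin ℝ S) :
    gradInner f g ∈ B := by
  rw [← gradDerivation_apply]
  exact (gradDerivation f).apply_mem_of_mem_adjoin hSB
    (fun t ht => (gradDerivation_apply f t).symm ▸ hf t ht) hg

lemma gradInner_mem_of_mem_adjoin (hSB : S ⊆ B) (hS : ∀ s ∈ S, ∀ t ∈ S, gradInner s t ∈ B)
    {f g : MvPolynomial σ ℝ} (hf : f ∈ Algebra.adjoin ℝ S) (hg : g ∈ Algebra.adjoin ℝ S) :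
    gradInner f g ∈ B := by
  rw [gradInner_comm]
  refine gradInner_mem_of_mem_adjoin_right hSB (fun s hs => ?_) hf
  rw [gradInner_comm]
  exact gradInner_mem_of_mem_adjoin_right hSB (hS s hs) hg

lemma lap_mem_of_mem_adjoin (hSB : S ⊆ B) (hlap : ∀ s ∈ S, lap s ∈ B)
    (hgrad : ∀ s ∈ S, ∀ t ∈ S, gradInner s t ∈ B) {f : MvPolynomial σ ℝ}
    (hf : f ∈ Algebra.adjoin ℝ S) : lap f ∈ B := by
  have hB : Algebra.adjoin ℝ S ≤ B := Algebra.adjoin_le hSB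
  induction hf using Algebra.adjoin_induction with
  | mem s hs => exact hlap s hs
  | algebraMap r => simp [lap]
  | add f g _ _ hf hg => simpa [lap, Finset.sum_add_distrib] using B.add_mem hf hg
  | mul f g hf' hg' hf hg =>
    rw [lap_mul]
    exact B.add_mem (B.add_mem (B.mul_mem hf (hB hg')) (B.mul_mem (hB hf') hg))
      (B.mul_mem (B.algebraMap_mem 2) (gradInner_mem_of_mem_adjoin hSB hgrad hf' hg'))

lemma gradInner_mem_of_lap_mem (hB : ∀ f ∈ B, lap f ∈ B) {f g : MvPolynomial σ ℝ}
    (hf : f ∈ B) (hg : g ∈ B) : gradInner f g ∈ B := by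
  have h : gradInner f g = (1 / 2 : ℝ) • (lap (f * g) - lap f * g - f * lap g) := by
    rw [lap_mul, two_mul]
    module
  rw [h]
  exact B.smul_mem (B.sub_mem (B.sub_mem (hB _ (B.mul_mem hf hg)) (B.mul_mem (hB f hf) hg))
    (B.mul_mem hf (hB g hg))) _

end Gradient

section Quad

variable {n : ℕ}

lemma quad_eq_sum_X_mul_linForm (M : Matrix (Fin n) (Fin n) ℝ) :
    quad M = ∑ i, X i * linForm (M i) := by
  simp only [quad, linForm, Finset.mul_sum]
  exact Finset.sum_congr rfl fun i _ => Finset.sum_congr rfl fun j _ => by ring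

lemma pderiv_quad (M : Matrix (Fin n) (Fin n) ℝ) (k : Fin n) :
    pderiv k (quad M) = linForm ((M + Mᵀ) k) := by
  change _ = linForm (M k + Mᵀ k)
  rw [quad_eq_sum_X_mul_linForm, map_sum, linForm_add]
  simp only [Derivation.leibniz, pderiv_linForm, pderiv_X, smul_eq_mul, Finset.sum_add_distrib]
  simp [Pi.single_apply, linForm, mul_comm, add_comm]

lemma sum_linForm_mul_linForm (A B : Matrix (Fin n) (Fin n) ℝ) :
    ∑ k, linForm (A k) * linForm (B k) = quad (Aᵀ * B) := by
  simp only [linForm, Finset.sum_mul_sum]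
  simp only [quad, Matrix.mul_apply, Matrix.transpose_apply, map_sum, Finset.sum_mul]
  rw [Finset.sum_comm]
  refine Finset.sum_congr rfl fun i _ => ?_
  rw [Finset.sum_comm]
  refine Finset.sum_congr rfl fun j _ => Finset.sum_congr rfl fun k _ => ?_
  rw [map_mul]
  ring

lemma gradInner_quad (M N : Matrix (Fin n) (Fin n) ℝ) :
    gradInner (quad M) (quad N) = quad ((M + Mᵀ)ᵀ * (N + Nᵀ)) := by
  simp only [gradInner, pderiv_quad]
  exact sum_linForm_mul_linForm _ _

lemma lap_quad (M : Matrix (Fin n) (Fin n) ℝ) : lap (quad M) = C (2 * M.trace) := by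
  simp only [lap, pderiv_quad, pderiv_linForm, ← map_sum]
  exact congrArg C ((Matrix.trace_add M Mᵀ).trans (by rw [Matrix.trace_transpose, two_mul]))

lemma quad_add (M N : Matrix (Fin n) (Fin n) ℝ) : quad (M + N) = quad M + quad N := by
  simp only [quad, Matrix.add_apply, map_add, add_mul, Finset.sum_add_distrib]

lemma quad_smul (c : ℝ) (M : Matrix (Fin n) (Fin n) ℝ) : quad (c • M) = c • quad M := by
  simp only [quad, Matrix.smul_apply, smul_eq_mul, map_mul, Finset.smul_sum, smul_eq_C_mul,
    mul_assoc]

lemma quad_transpose (M : Matrix (Fin n) (Fin n) ℝ) : quad Mᵀ = quad M := by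
  rw [quad, Finset.sum_comm]
  exact Finset.sum_congr rfl fun i _ => Finset.sum_congr rfl fun j _ => by
    rw [Matrix.transpose_apply, mul_right_comm]

lemma quad_symmetrize (M : Matrix (Fin n) (Fin n) ℝ) :
    quad ((1 / 2 : ℝ) • (M + Mᵀ)) = quad M := by
  rw [quad_smul, quad_add, quad_transpose, ← two_smul ℝ (quad M), smul_smul]
  norm_num

lemma quad_jordan_of_isSymm {P Q : Matrix (Fin n) (Fin n) ℝ} (hP : P.IsSymm) (hQ : Q.IsSymm) :
    quad ((1 / 2 : ℝ) • (P * Q + Q * P)) = quad (P * Q) := by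
  rw [← quad_symmetrize (P * Q), Matrix.transpose_mul, hP.eq, hQ.eq]

lemma gradInner_quad_of_isSymm {M N : Matrix (Fin n) (Fin n) ℝ} (hM : M.IsSymm)
    (hN : N.IsSymm) : gradInner (quad M) (quad N) = quad (((2 : ℝ) • M) * ((2 : ℝ) • N)) := by
  rw [gradInner_quad, hM.eq, hN.eq, Matrix.transpose_add, hM.eq, two_smul, two_smul]

lemma gradInner_quad_eq_four_smul_quad_jordan {M N : Matrix (Fin n) (Fin n) ℝ}
    (hM : M.IsSymm) (hN : N.IsSymm) :
    gradInner (quad M) (quad N) = (4 : ℝ) • quad ((1 / 2 : ℝ) • (M * N + N * M)) := by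
  rw [gradInner_quad_of_isSymm hM hN, quad_jordan_of_isSymm hM hN, smul_mul_smul, quad_smul]
  norm_num

lemma quad_single (i j : Fin n) : quad (Matrix.single i j 1) = X i * X j := by
  simp [quad, Matrix.single_apply, ite_and, apply_ite C, ite_mul]

variable (n) in
noncomputable def quadLinearMap : Matrix (Fin n) (Fin n) ℝ →ₗ[ℝ] MvPolynomial (Fin n) ℝ where
  toFun := quad
  map_add' := quad_add
  map_smul' := quad_smul

lemma exists_isSymm_quad_eq {f : MvPolynomial (Fin n) ℝ} (hf : f.IsHomogeneous 2) :
    ∃ M : Matrix (Fin n) (Fin n) ℝ, M.IsSymm ∧ quad M = f := by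
  set V := Set.range (X : Fin n → MvPolynomial (Fin n) ℝ)
  have hspan : f ∈ Submodule.span ℝ (V * V) := by
    rwa [← Submodule.span_mul_span, ← pow_two, ← homogeneousSubmodule_one_eq_span_X,
      homogeneousSubmodule_one_pow]
  have hrange : Submodule.span ℝ (V * V) ≤ LinearMap.range (quadLinearMap n) := by
    rw [Submodule.span_le]
    rintro _ ⟨_, ⟨i, rfl⟩, _, ⟨j, rfl⟩, rfl⟩
    exact ⟨Matrix.single i j 1, quad_single i j⟩
  obtain ⟨M, rfl⟩ := hrange hspan
  exact ⟨(1 / 2 : ℝ) • (M + Mᵀ), (Matrix.isSymm_add_transpose_self M).smul _, quad_symmetrize M⟩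

end Quad

/-- Identifying quadratic forms f(x) = xᵀMx with symmetric matrices,
⟨∇f,∇g⟩ is the quadratic form of (2M·2N + 2N·2M)/2; consequently a subalgebra
containing r² and generated by its quadratics is Laplacian iff its degree-2 part
is closed under the Jordan product M∙N = (MN+NM)/2. -/
theorem gradInner_quad_jordan {n : ℕ} :
    (∀ M N : Matrix (Fin n) (Fin n) ℝ, M.IsSymm → N.IsSymm →
      gradInner (quad M) (quad N) =
        quad (((1 : ℝ) / 2) • (((2:ℝ) • M) * ((2:ℝ) • N) + ((2:ℝ) • N) * ((2:ℝ) • M)))) ∧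
    (∀ A : Subalgebra ℝ (MvPolynomial (Fin n) ℝ), rsq ∈ A →
      A = Algebra.adjoin ℝ {f | f ∈ A ∧ f.IsHomogeneous 2} →
      ((∀ f ∈ A, lap f ∈ A) ↔
        ∀ M N : Matrix (Fin n) (Fin n) ℝ, M.IsSymm → N.IsSymm →
          quad M ∈ A → quad N ∈ A →
          quad (((1 : ℝ) / 2) • (M * N + N * M)) ∈ A)) := by
  refine ⟨fun M N hM hN => ?_, fun A _ hA => ?_⟩
  · rw [gradInner_quad_of_isSymm hM hN, quad_jordan_of_isSymm (hM.smul 2) (hN.smul 2)]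
  have hjordan : ∀ M N : Matrix (Fin n) (Fin n) ℝ, M.IsSymm → N.IsSymm →
      (gradInner (quad M) (quad N) ∈ A ↔ quad (((1 : ℝ) / 2) • (M * N + N * M)) ∈ A) :=
    fun M N hM hN => by
      rw [gradInner_quad_eq_four_smul_quad_jordan hM hN]
      exact Submodule.smul_mem_iff (Subalgebra.toSubmodule A) four_ne_zero
  refine ⟨fun hlap M N hM hN hMA hNA =>
    (hjordan M N hM hN).1 (gradInner_mem_of_lap_mem hlap hMA hNA), fun hJ f hf => ?_⟩
  set S := {f | f ∈ A ∧ f.IsHomogeneous 2}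
  have hgrad : ∀ s ∈ S, ∀ t ∈ S, gradInner s t ∈ A := by
    rintro _ ⟨hsA, hs⟩ _ ⟨htA, ht⟩
    obtain ⟨M, hM, rfl⟩ := exists_isSymm_quad_eq hs
    obtain ⟨N, hN, rfl⟩ := exists_isSymm_quad_eq ht
    exact (hjordan M N hM hN).2 (hJ M N hM hN hsA htA)
  have hlap : ∀ s ∈ S, lap s ∈ A := by
    rintro _ ⟨-, hs⟩
    obtain ⟨M, -, rfl⟩ := exists_isSymm_quad_eq hs
    rw [lap_quad]
    exact A.algebraMap_mem _
  exact lap_mem_of_mem_adjoin (fun s hs => hs.1) hlap hgrad (hA.le hf)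
end

section
/- With f_{ij}(v₁,…,v_k) = ⟨vᵢ,vⱼ⟩ and h_S the determinant polynomials on (ℝ^n)^k (S an n-element subset of {1,…,k}): ⟨∇f_{ij}, ∇h_S⟩ = 0 if |S ∩ {i,j}| ∈ {0,2}, and ⟨∇f_{ij}, ∇h_S⟩ = ± h_{(S∖{i})∪{j}} if i ∈ S and j ∉ S. -/
open MvPolynomial

/-- f_{ij}(v₁,…,v_k) = ⟨vᵢ,vⱼ⟩ as a polynomial on (ℝⁿ)ᵏ. -/
noncomputable def fpair {n k : ℕ} (i j : Fin k) :
    MvPolynomial (Fin k × Fin n) ℝ :=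
  ∑ a : Fin n, X (i, a) * X (j, a)

/-- h_S(v₁,…,v_k) = det(v_{s₁},…,v_{sₙ}) for an injective s : Fin n → Fin k. -/
noncomputable def hdet {n k : ℕ} (s : Fin n → Fin k) :
    MvPolynomial (Fin k × Fin n) ℝ :=
  Matrix.det (Matrix.of fun a b : Fin n => (X (s b, a) : MvPolynomial (Fin k × Fin n) ℝ))

/-!
Pairing with `∇f_{ij}` is the sum of the two polarization derivations
`D_{i→j} = Σₐ x_{ja} ∂/∂x_{ia}` and `D_{j→i}`. A derivation acts on a determinant column by
column, and `D_{c→j}` sends the column `v_c` to `v_j` and kills every other column, so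
`D_{c→j} h_S` is the sum of `h_S` with one occurrence of `v_c` replaced by `v_j`. Such a
determinant vanishes as soon as `v_j` already occurs in it, and when `c ∉ S` the sum is empty.
-/

namespace Derivation

variable {R A : Type*} [CommSemiring R] [CommRing A] [Algebra R A] (D : Derivation R A A)

theorem leibniz_finset_prod {ι : Type*} [DecidableEq ι] (t : Finset ι) (f : ι → A) :
    D (∏ i ∈ t, f i) = ∑ i ∈ t, ∏ j ∈ t, Function.update f i (D (f i)) j := by
  induction t using Finset.induction_on with
  | empty => simp
  | @insert a t ha ih =>
    have hupdate_a : ∏ j ∈ t, Function.update f a (D (f a)) j = ∏ j ∈ t, f j :=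
      Finset.prod_congr rfl fun j hj => Function.update_of_ne (ne_of_mem_of_not_mem hj ha) _ _
    have hupdate_t : ∀ i ∈ t, Function.update f i (D (f i)) a = f a := fun i hi =>
      Function.update_of_ne (ne_of_mem_of_not_mem hi ha).symm _ _
    rw [Finset.prod_insert ha, leibniz, ih, Finset.sum_insert ha, Finset.prod_insert ha,
      Function.update_self, hupdate_a, smul_eq_mul, smul_eq_mul, Finset.mul_sum, add_comm]
    congr 1
    · ring
    · exact Finset.sum_congr rfl fun i hi => by rw [Finset.prod_insert ha, hupdate_t i hi]

theorem map_det {m : Type*} [Fintype m] [DecidableEq m] (M : Matrix m m A) :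
    D M.det = ∑ b, (M.updateCol b fun a => D (M a b)).det := by
  simp only [Matrix.det_apply, map_sum, Units.smul_def, map_zsmul, leibniz_finset_prod,
    Finset.smul_sum]
  rw [Finset.sum_comm]
  refine Finset.sum_congr rfl fun b _ => Finset.sum_congr rfl fun σ _ => ?_
  congr 1
  refine Finset.prod_congr rfl fun x _ => ?_
  by_cases hx : x = b
  · subst hx; simp
  · simp [hx]

end Derivation

section Polarization

variable {κ ι : Type*} [Fintype ι]

noncomputable def polarization (c j : κ) :
    Derivation ℝ (MvPolynomial (κ × ι) ℝ) (MvPolynomial (κ × ι) ℝ) :=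
  ∑ a : ι, (X (j, a) : MvPolynomial (κ × ι) ℝ) • pderiv (c, a)

theorem polarization_apply (c j : κ) (g : MvPolynomial (κ × ι) ℝ) :
    polarization c j g = ∑ a, X (j, a) * pderiv (c, a) g := by
  rw [polarization, ← Derivation.coeFnAddMonoidHom_apply, map_sum, Finset.sum_apply]
  rfl

theorem polarization_X [DecidableEq κ] [DecidableEq ι] (c j d : κ) (a : ι) :
    polarization c j (X (d, a)) = if d = c then X (j, a) else 0 := by
  simp [polarization_apply, pderiv_X, Pi.single_apply, Prod.ext_iff, ite_and]

end Polarization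

section Fpair

variable {n k : ℕ}

theorem pderiv_fpair (i j c : Fin k) (a : Fin n) :
    pderiv (c, a) (fpair i j)
      = (if i = c then X (j, a) else 0) + (if j = c then X (i, a) else 0) := by
  simp [fpair, pderiv_X, Pi.single_apply, Prod.ext_iff, Finset.sum_add_distrib, ite_and,
    add_comm]

theorem gradInner_fpair (i j : Fin k) (g : MvPolynomial (Fin k × Fin n) ℝ) :
    gradInner (fpair i j) g = polarization i j g + polarization j i g := by
  simp [gradInner, Fintype.sum_prod_type, pderiv_fpair, polarization_apply, add_mul,
    Finset.sum_add_distrib]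

end Fpair

section Hdet

variable {n k : ℕ}

noncomputable def coordMatrix (s : Fin n → Fin k) :
    Matrix (Fin n) (Fin n) (MvPolynomial (Fin k × Fin n) ℝ) :=
  Matrix.of fun a b => X (s b, a)

theorem hdet_eq_det_coordMatrix (s : Fin n → Fin k) : hdet s = (coordMatrix s).det := rfl

theorem coordMatrix_update (s : Fin n → Fin k) (b : Fin n) (j : Fin k) :
    coordMatrix (Function.update s b j) = (coordMatrix s).updateCol b fun a => X (j, a) := by
  ext a b'
  by_cases h : b' = b
  · subst h; simp [coordMatrix]
  · simp [coordMatrix, h]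

theorem hdet_eq_zero_of_eq {s : Fin n → Fin k} {a b : Fin n} (hab : a ≠ b) (h : s a = s b) :
    hdet s = 0 :=
  Matrix.det_zero_of_column_eq hab fun r => by simp [h]

theorem polarization_hdet (c j : Fin k) (s : Fin n → Fin k) :
    polarization c j (hdet s) = ∑ b, if s b = c then hdet (Function.update s b j) else 0 := by
  rw [hdet_eq_det_coordMatrix, Derivation.map_det]
  refine Finset.sum_congr rfl fun b _ => ?_
  split_ifs with h
  · rw [hdet_eq_det_coordMatrix, coordMatrix_update]
    congr
    funext a
    rw [coordMatrix, Matrix.of_apply, polarization_X, if_pos h]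
  · exact Matrix.det_eq_zero_of_column_eq_zero b fun a => by simp [coordMatrix, polarization_X, h]

theorem polarization_hdet_of_forall_ne {c : Fin k} (j : Fin k) {s : Fin n → Fin k}
    (h : ∀ b, s b ≠ c) : polarization c j (hdet s) = 0 := by
  simp [polarization_hdet, h]

theorem polarization_hdet_of_mem_range {c j : Fin k} {s : Fin n → Fin k} (hcj : c ≠ j)
    (hj : ∃ b, s b = j) : polarization c j (hdet s) = 0 := by
  obtain ⟨b', hb'⟩ := hj
  refine polarization_hdet c j s ▸ Finset.sum_eq_zero fun b _ => ?_
  split_ifs with hb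
  · have hbb' : b ≠ b' := by rintro rfl; exact hcj (hb.symm.trans hb')
    exact hdet_eq_zero_of_eq hbb' (by simp [Function.update_of_ne hbb'.symm, hb'])
  · rfl

theorem polarization_hdet_of_injective {c : Fin k} (j : Fin k) {s : Fin n → Fin k}
    (hs : Function.Injective s) {a : Fin n} (ha : s a = c) :
    polarization c j (hdet s) = hdet (Function.update s a j) := by
  rw [polarization_hdet, Finset.sum_eq_single a
    (fun b _ hb => if_neg fun h => hb (hs (h.trans ha.symm))) (by simp), if_pos ha]

end Hdet

/-- ⟨∇f_{ij}, ∇h_S⟩ vanishes if |S ∩ {i,j}| is 0 or 2, and equals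
± h_{(S∖{i})∪{j}} if i ∈ S and j ∉ S. -/
theorem gradInner_fpair_hdet {n k : ℕ} (s : Fin n → Fin k)
    (hs : Function.Injective s) (i j : Fin k) :
    ((∀ a, s a ≠ i) → (∀ a, s a ≠ j) →
      gradInner (fpair (n := n) i j) (hdet s) = 0) ∧
    (i ≠ j → (∃ a, s a = i) → (∃ b, s b = j) →
      gradInner (fpair (n := n) i j) (hdet s) = 0) ∧
    (∀ a, s a = i → (∀ b, s b ≠ j) →
      ∃ ε : ℝ, (ε = 1 ∨ ε = -1) ∧
        gradInner (fpair (n := n) i j) (hdet s) =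
          C ε * hdet (Function.update s a j)) := by
  refine ⟨fun hi hj => ?_, fun hij hi hj => ?_, fun a ha hj => ⟨1, Or.inl rfl, ?_⟩⟩ <;>
    rw [gradInner_fpair]
  · rw [polarization_hdet_of_forall_ne j hi, polarization_hdet_of_forall_ne i hj, add_zero]
  · rw [polarization_hdet_of_mem_range hij hj, polarization_hdet_of_mem_range hij.symm hi,
      add_zero]
  · rw [polarization_hdet_of_injective j hs ha, polarization_hdet_of_forall_ne i hj, add_zero,
      C_1, one_mul]
end

section
/- Let F(x₁,…,x_k) = f(xᵢ) for a homogeneous polynomial f on ℝ^n, and let P_{j i} = Σ_a x_j^a ∂/∂x_i^a be the classical polarization operator on ℝ[(ℝ^n)^k]. Then for any polynomial H on (ℝ^n)^k, ⟨∇(P_{ji}F), ∇H⟩ = P^f_{ij}(H) + Σ_{a,b} x_j^a (∂²f/∂x^a∂x^b)(xᵢ) (∂H/∂xᵢ^b), where P^f_{ij}(H) = Σ_a (∂f/∂x^a)(xᵢ) ∂H/∂x_j^a is the Wallach polarization of H. -/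
/-!
By the product rule, `∂_c (P_{ji} F) = δ_{c.1, j} ∂_{(i, c.2)} F + Σ_a x_j^a ∂_c ∂_{(i,a)} F`.
Paired with `∇H`, the first term is a polarization of `H` by `∇F`, which for `F = f(xᵢ)` is the
Wallach polarization. In the second term only the coordinates of slot `i` survive, since
`∂_{(i,a)} F = (∂_a f)(xᵢ)`, and symmetry of second derivatives puts the Hessian in the stated order.
-/

open MvPolynomial

/-- F(x₁,…,x_k) = f(xᵢ): the single-variable polynomial f placed in slot i. -/
noncomputable def slot {n k : ℕ} (i : Fin k) (f : MvPolynomial (Fin n) ℝ) :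
    MvPolynomial (Fin k × Fin n) ℝ :=
  rename (fun a => (i, a)) f

/-- The classical polarization operator P_{ji} = Σ_a x_j^a ∂/∂x_i^a. -/
noncomputable def classicalPol {n k : ℕ} (j i : Fin k)
    (H : MvPolynomial (Fin k × Fin n) ℝ) : MvPolynomial (Fin k × Fin n) ℝ :=
  ∑ a : Fin n, X (j, a) * pderiv (i, a) H

/-- The Wallach polarization operator P^f_{ij}(H) = Σ_a (∂f/∂x^a)(xᵢ)·∂H/∂x_j^a. -/
noncomputable def wallachPol {n k : ℕ} (f : MvPolynomial (Fin n) ℝ)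
    (i j : Fin k) (H : MvPolynomial (Fin k × Fin n) ℝ) :
    MvPolynomial (Fin k × Fin n) ℝ :=
  ∑ a : Fin n, slot i (pderiv a f) * pderiv (j, a) H

namespace MvPolynomial

variable {R σ : Type*} [CommSemiring R]

theorem pderiv_comm (a b : σ) (f : MvPolynomial σ R) :
    pderiv a (pderiv b f) = pderiv b (pderiv a f) := by
  rcases eq_or_ne a b with rfl | hab
  · rfl
  induction f using MvPolynomial.induction_on' with
  | monomial s c =>
    simp only [pderiv_monomial, Finsupp.tsub_apply, tsub_right_comm,
      Finsupp.single_eq_of_ne hab, Finsupp.single_eq_of_ne hab.symm, tsub_zero, mul_right_comm]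
  | add p q hp hq => simp only [map_add, hp, hq]

theorem pderiv_rename_of_notMem_range {τ : Type*} {g : σ → τ} {c : τ}
    (hc : c ∉ Set.range g) (f : MvPolynomial σ R) : pderiv c (rename g f) = 0 := by
  classical
  refine pderiv_eq_zero_of_notMem_vars fun hmem => hc ?_
  obtain ⟨a, -, rfl⟩ := Finset.mem_image.mp (vars_rename g f hmem)
  exact ⟨a, rfl⟩

end MvPolynomial

section Slot

variable {n k : ℕ}

theorem pderiv_slot_self (i : Fin k) (a : Fin n) (f : MvPolynomial (Fin n) ℝ) :
    pderiv (i, a) (slot i f) = slot i (pderiv a f) :=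
  pderiv_rename (Prod.mk_right_injective i) a f

theorem pderiv_slot_of_ne {i i' : Fin k} (h : i' ≠ i) (a : Fin n)
    (f : MvPolynomial (Fin n) ℝ) : pderiv (i', a) (slot i f) = 0 :=
  pderiv_rename_of_notMem_range (by rintro ⟨b, hb⟩; exact h (congrArg Prod.fst hb).symm) f

theorem gradInner_slot (i : Fin k) (f : MvPolynomial (Fin n) ℝ)
    (H : MvPolynomial (Fin k × Fin n) ℝ) :
    gradInner (slot i f) H = ∑ b, slot i (pderiv b f) * pderiv (i, b) H := by
  have off_slot (i' : Fin k) (h : i' ≠ i) :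
      ∑ b, pderiv (i', b) (slot i f) * pderiv (i', b) H = 0 := by
    simp only [pderiv_slot_of_ne h, zero_mul, Finset.sum_const_zero]
  rw [gradInner, Fintype.sum_prod_type,
    Finset.sum_eq_single i (fun i' _ => off_slot i') (by simp)]
  simp only [pderiv_slot_self]

end Slot

theorem pderiv_classicalPol {n k : ℕ} (j i : Fin k) (F : MvPolynomial (Fin k × Fin n) ℝ)
    (c : Fin k × Fin n) :
    pderiv c (classicalPol j i F) =
      (if c.1 = j then pderiv (i, c.2) F else 0) +
        ∑ a, X (j, a) * pderiv c (pderiv (i, a) F) := by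
  classical
  obtain ⟨c1, c2⟩ := c
  simp only [classicalPol, map_sum, pderiv_mul, pderiv_X, Pi.single_apply, Prod.mk.injEq,
    Finset.sum_add_distrib]
  congr 1
  split_ifs with h
  · simp [h]
  · simp [Ne.symm h]

theorem gradInner_classicalPol_eq_sum_add_sum {n k : ℕ} (j i : Fin k)
    (F H : MvPolynomial (Fin k × Fin n) ℝ) :
    gradInner (classicalPol j i F) H =
      ∑ a, pderiv (i, a) F * pderiv (j, a) H + ∑ a, X (j, a) * gradInner (pderiv (i, a) F) H := by
  simp only [gradInner, pderiv_classicalPol, add_mul, Finset.sum_add_distrib, ite_mul, zero_mul,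
    Finset.sum_mul, Finset.mul_sum, mul_assoc]
  congr 1
  · rw [Fintype.sum_prod_type, Finset.sum_eq_single j (fun j' _ h => by simp [h]) (by simp)]
    simp
  · exact Finset.sum_comm

theorem gradInner_classicalPol_general {n k : ℕ} (i j : Fin k)
    (f : MvPolynomial (Fin n) ℝ)
    (H : MvPolynomial (Fin k × Fin n) ℝ) :
    gradInner (classicalPol j i (slot i f)) H =
      wallachPol f i j H +
        ∑ a : Fin n, ∑ b : Fin n,
          X (j, a) * slot i (pderiv a (pderiv b f)) * pderiv (i, b) H := by
  rw [gradInner_classicalPol_eq_sum_add_sum, wallachPol]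
  simp only [pderiv_slot_self]
  congr 1
  refine Finset.sum_congr rfl fun a _ => ?_
  rw [gradInner_slot, Finset.mul_sum]
  refine Finset.sum_congr rfl fun b _ => ?_
  rw [pderiv_comm, mul_assoc]

/-- ⟨∇(P_{ji}F), ∇H⟩ = P^f_{ij}(H) + Σ_{a,b} x_j^a·f_{ab}(xᵢ)·∂H/∂xᵢ^b. -/
theorem gradInner_classicalPol {n k d : ℕ} (i j : Fin k)
    (f : MvPolynomial (Fin n) ℝ) (hf : f.IsHomogeneous d)
    (H : MvPolynomial (Fin k × Fin n) ℝ) :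
    gradInner (classicalPol j i (slot i f)) H =
      wallachPol f i j H +
        ∑ a : Fin n, ∑ b : Fin n,
          X (j, a) * slot i (pderiv a (pderiv b f)) * pderiv (i, b) H :=
  gradInner_classicalPol_general i j f H
end
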